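/- The minimum power budget for a first-order intervention rule based on individual powers to sustain p* ∈ ∏_i (0,P_i] equals PB_1(p*) = max_i (P_i - p_i*)(Σ_{j≠i} h_ij p_j* + n_i)/(p_i* h_{i0}); that is, p* is sustainable by some first-order rule with capability P_0 if and only if P_0 ≥ PB_1(p*). -/

import Mathlib

open Finset

/-- First-order intervention rule based on individual transmit powers:
`f(p) = [∑ i, α_i |p_i - p_i*|]₀^{P₀}` (the sum is nonnegative, so the lower
truncation is inactive). -/
noncomputable def intv {N : ℕ} (α pstar : Fin N → ℝ) (P0 : ℝ) (p : Fin N → ℝ) : ℝ :=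
  min (∑ i, α i * |p i - pstar i|) P0

/-- SINR of user `i` under the intervention rule: `γ_i(f(p), p) =
h_ii p_i / (h_i0 f(p) + ∑_{j≠i} h_ij p_j + n_i)`. -/
noncomputable def sinr {N : ℕ} (h : Fin N → Fin N → ℝ) (h0 n α pstar : Fin N → ℝ)
    (P0 : ℝ) (i : Fin N) (p : Fin N → ℝ) : ℝ :=
  h i i * p i / (h0 i * intv α pstar P0 p + ∑ j ∈ univ.erase i, h i j * p j + n i)

/-- `p` is a Nash equilibrium: no user can improve its payoff by a unilateral
deviation within `[0, Pmax i]`. -/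
def isNE {N : ℕ} (Pmax : Fin N → ℝ) (payoff : Fin N → (Fin N → ℝ) → ℝ)
    (p : Fin N → ℝ) : Prop :=
  ∀ i, ∀ q, 0 ≤ q → q ≤ Pmax i →
    payoff i (Function.update p i q) ≤ payoff i p

/-!
At `p*` the intervention is idle, so user `i` gets `h_ii p_i* / D_i`, where `D_i` is its
interference plus noise, while a unilateral deviation to `q` gets
`h_ii q / (h_i0 min(α_i |q - p_i*|, P₀) + D_i)`. Lowering the power never pays, and raising it
does not pay iff `(q - p_i*) D_i ≤ p_i* h_i0 min(α_i (q - p_i*), P₀)`. Since the minimum is at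
most `P₀`, the deviation `q = P_i` forces the budget bound. Conversely the slope
`α_i = D_i / (p_i* h_i0)` makes the first branch of the minimum an equality, and the budget
bound covers the truncated branch.
-/

open Function

section Intervention

variable {N : ℕ} (h : Fin N → Fin N → ℝ) (h0 n α pstar : Fin N → ℝ) (P0 : ℝ)

def interference (p : Fin N → ℝ) (i : Fin N) : ℝ :=
  ∑ j ∈ univ.erase i, h i j * p j + n i

variable {h n} in
lemma interference_pos {p : Fin N → ℝ} (hh : ∀ i j, 0 ≤ h i j) (hn : ∀ i, 0 < n i)
    (hp : ∀ i, 0 ≤ p i) (i : Fin N) : 0 < interference h n p i :=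
  add_pos_of_nonneg_of_pos (sum_nonneg fun j _ => mul_nonneg (hh i j) (hp j)) (hn i)

lemma interference_update_self (p : Fin N → ℝ) (i : Fin N) (q : ℝ) :
    interference h n (update p i q) i = interference h n p i := by
  unfold interference
  congr 1
  exact sum_congr rfl fun j hj => by rw [update_of_ne (ne_of_mem_erase hj)]

variable {P0} in
lemma intv_self (hP0 : 0 ≤ P0) : intv α pstar P0 pstar = 0 := by
  simp [intv, hP0]

lemma intv_update_self (i : Fin N) (q : ℝ) :
    intv α pstar P0 (update pstar i q) = min (α i * |q - pstar i|) P0 := by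
  unfold intv
  congr 1
  rw [sum_eq_single i (fun j _ hj => by simp [update_of_ne hj]) (by simp)]
  simp

variable {P0} in
lemma sinr_self (hP0 : 0 ≤ P0) (i : Fin N) :
    sinr h h0 n α pstar P0 i pstar = h i i * pstar i / interference h n pstar i := by
  rw [sinr, intv_self α pstar hP0, interference, mul_zero, zero_add]

lemma sinr_update_self (i : Fin N) (q : ℝ) :
    sinr h h0 n α pstar P0 i (update pstar i q) =
      h i i * q / (h0 i * min (α i * |q - pstar i|) P0 + interference h n pstar i) := by
  rw [sinr, intv_update_self, update_self, add_assoc]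
  exact congrArg _ (congrArg _ (interference_update_self h n pstar i q))

end Intervention

lemma div_le_div_iff_sub_mul_le {a c D x q : ℝ} (ha : 0 < a) (hD : 0 < D) (hc : 0 ≤ c) :
    a * q / (c + D) ≤ a * x / D ↔ (q - x) * D ≤ x * c := by
  rw [div_le_div_iff₀ (by linarith) hD]
  constructor <;> intro hle <;> nlinarith

lemma sub_mul_le_mul_min_of_budget {x c D q P P0 : ℝ} (hxc : 0 < x * c) (hD : 0 < D)
    (hP0 : 0 ≤ P0) (hqP : q ≤ P) (hbudget : x < P → (P - x) * D / (x * c) ≤ P0) :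
    (q - x) * D ≤ x * (c * min (D / (x * c) * |q - x|) P0) := by
  rcases le_or_gt q x with hqx | hxq
  · have hpenalty : 0 ≤ x * c * min (D / (x * c) * |q - x|) P0 :=
      mul_nonneg hxc.le (le_min (by positivity) hP0)
    rw [← mul_assoc]
    exact (mul_nonpos_of_nonpos_of_nonneg (sub_nonpos.2 hqx) hD.le).trans hpenalty
  · have hcancel : x * c * (D / (x * c) * (q - x)) = (q - x) * D := by
      rw [← mul_assoc, mul_div_cancel₀ D hxc.ne', mul_comm]
    rw [← mul_assoc, mul_min_of_nonneg _ _ hxc.le, abs_of_pos (sub_pos.2 hxq), hcancel]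
    have hbudget' := (div_le_iff₀' hxc).1 (hbudget (hxq.trans_le hqP))
    exact le_min le_rfl <|
      (mul_le_mul_of_nonneg_right (by linarith) hD.le).trans hbudget'

theorem isNE_sinr_iff {N : ℕ} {h : Fin N → Fin N → ℝ} {h0 n α pstar : Fin N → ℝ}
    {P0 : ℝ} (Pmax : Fin N → ℝ) (hhii : ∀ i, 0 < h i i)
    (hI : ∀ i, 0 < interference h n pstar i)
    (hh0 : ∀ i, 0 ≤ h0 i) (hα : ∀ i, 0 ≤ α i) (hP0 : 0 ≤ P0) :
    isNE Pmax (sinr h h0 n α pstar P0) pstar ↔ ∀ i q, 0 ≤ q → q ≤ Pmax i →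
      (q - pstar i) * interference h n pstar i ≤
        pstar i * (h0 i * min (α i * |q - pstar i|) P0) := by
  refine forall_congr' fun i => forall_congr' fun q =>
    imp_congr_right fun _ => imp_congr_right fun _ => ?_
  rw [sinr_update_self, sinr_self _ _ _ _ _ hP0]
  exact div_le_div_iff_sub_mul_le (hhii i) (hI i)
    (mul_nonneg (hh0 i) (le_min (mul_nonneg (hα i) (abs_nonneg _)) hP0))

theorem stmt9_general (N : ℕ) (h : Fin N → Fin N → ℝ) (h0 n Pmax pstar : Fin N → ℝ) (P0 : ℝ)
    (hh : ∀ i j, 0 < h i j) (hh0 : ∀ i, 0 < h0 i) (hn : ∀ i, 0 < n i)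
    (hP : ∀ i, 0 < Pmax i) (hp1 : ∀ i, 0 < pstar i)
    (hP0 : 0 < P0) :
    (∃ α : Fin N → ℝ, (∀ i, 0 ≤ α i) ∧
        isNE Pmax (sinr h h0 n α pstar P0) pstar) ↔
    (∀ i, pstar i < Pmax i →
      (Pmax i - pstar i) * (∑ j ∈ univ.erase i, h i j * pstar j + n i) /
        (pstar i * h0 i) ≤ P0) := by
  have hI : ∀ i, 0 < interference h n pstar i :=
    interference_pos (fun i j => (hh i j).le) hn (fun i => (hp1 i).le)
  have hxc : ∀ i, 0 < pstar i * h0 i := fun i => mul_pos (hp1 i) (hh0 i)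
  have hNE_iff (α : Fin N → ℝ) (hα : ∀ i, 0 ≤ α i) :=
    isNE_sinr_iff Pmax (fun i => hh i i) hI (fun i => (hh0 i).le) hα hP0.le
  constructor
  · rintro ⟨α, hα, hNE⟩ i -
    have hdev := (hNE_iff α hα).1 hNE i (Pmax i) (hP i).le le_rfl
    rw [div_le_iff₀' (hxc i)]
    calc (Pmax i - pstar i) * interference h n pstar i
        ≤ pstar i * (h0 i * min (α i * |Pmax i - pstar i|) P0) := hdev
      _ ≤ pstar i * h0 i * P0 := by
        rw [← mul_assoc]
        exact mul_le_mul_of_nonneg_left (min_le_right _ _) (hxc i).le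
  · intro hbudget
    have hα : ∀ i, 0 ≤ interference h n pstar i / (pstar i * h0 i) :=
      fun i => (div_pos (hI i) (hxc i)).le
    exact ⟨_, hα, (hNE_iff _ hα).2 fun i q _ hqP =>
      sub_mul_le_mul_min_of_budget (hxc i) (hI i) hP0.le hqP (hbudget i)⟩

/-- Characterization of the minimum power budget `PB₁(p*)`: the target
`p* ∈ ∏_i (0, P_i]` is sustainable by some first-order intervention rule (based
on individual powers) with capability `P₀` iff
`P₀ ≥ (P_i - p_i*)(∑_{j≠i} h_ij p_j* + n_i)/(p_i* h_i0)` for every user `i` with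
`p_i* < P_i`, i.e. iff `P₀ ≥ PB₁(p*)`. -/
theorem stmt9 (N : ℕ) (h : Fin N → Fin N → ℝ) (h0 n Pmax pstar : Fin N → ℝ) (P0 : ℝ)
    (hh : ∀ i j, 0 < h i j) (hh0 : ∀ i, 0 < h0 i) (hn : ∀ i, 0 < n i)
    (hP : ∀ i, 0 < Pmax i) (hp1 : ∀ i, 0 < pstar i) (hp2 : ∀ i, pstar i ≤ Pmax i)
    (hP0 : 0 < P0) :
    (∃ α : Fin N → ℝ, (∀ i, 0 ≤ α i) ∧
        isNE Pmax (sinr h h0 n α pstar P0) pstar) ↔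
    (∀ i, pstar i < Pmax i →
      (Pmax i - pstar i) * (∑ j ∈ univ.erase i, h i j * pstar j + n i) /
        (pstar i * h0 i) ≤ P0) :=
  stmt9_general N h h0 n Pmax pstar P0 hh hh0 hn hP hp1 hP0
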